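/- Let R be a commutative ring and q ∈ R. Define H_k(x) = Σ_{l=0}^{k} binom(k,l)_q · x^l in R[x]. Then for every n ≥ 0: x^n = Σ_{k=0}^{n} binom(n,k)_q · (−1)^{n−k} · q^{C(n−k,2)} · H_k(x), where C(m,2) = m(m−1)/2. -/

import Mathlib

/-!
Write `c m = (-1)^m q^(m choose 2)` and `P_n = Σ_k binom(n,k)_q c(n-k) H_k`. The q-Pascal recurrence
for `binom(n+1,k)_q`, together with `q^k c(n+1-k) = -q^n c(n-k)`, gives
`P_{n+1} = Σ_k binom(n,k)_q c(n-k) (H_{k+1} - q^n H_k)`, and the same recurrence read on coefficients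
gives `H_{k+1}(x) = x H_k(x) + H_k(q x)`. Hence `P_{n+1}(x) = x P_n(x) + P_n(q x) - q^n P_n(x)`, and
by induction `P_n = x^n`, since `x · x^n + (q x)^n - q^n x^n = x^(n+1)`.
-/

open Polynomial Finset

/-- The Gaussian (q-)binomial coefficients in a commutative ring, defined by
`binom(n,0)_q = 1`, `binom(0,k)_q = 0` for `k > 0`, and
`binom(n+1,k)_q = q^k binom(n,k)_q + binom(n,k-1)_q`. -/
def gaussBinom {R : Type*} [CommRing R] (q : R) : ℕ → ℕ → R
  | _, 0 => 1
  | 0, _ + 1 => 0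
  | n + 1, k + 1 => q ^ (k + 1) * gaussBinom q n (k + 1) + gaussBinom q n k

section

variable {R : Type*} [CommRing R] (q : R)

@[simp]
theorem gaussBinom_zero_right (n : ℕ) : gaussBinom q n 0 = 1 := by
  cases n <;> rfl

theorem gaussBinom_succ_succ (n k : ℕ) :
    gaussBinom q (n + 1) (k + 1) = q ^ (k + 1) * gaussBinom q n (k + 1) + gaussBinom q n k :=
  rfl

theorem gaussBinom_eq_zero_of_lt : ∀ {n k : ℕ}, n < k → gaussBinom q n k = 0
  | 0, _ + 1, _ => rfl
  | n + 1, k + 1, h => by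
    rw [gaussBinom_succ_succ, gaussBinom_eq_zero_of_lt (by omega),
      gaussBinom_eq_zero_of_lt (by omega), mul_zero, add_zero]

theorem pow_mul_neg_one_pow_mul_pow_choose_succ_sub {n k : ℕ} (h : k ≤ n) :
    q ^ k * ((-1) ^ (n + 1 - k) * q ^ ((n + 1 - k).choose 2)) =
      -q ^ n * ((-1) ^ (n - k) * q ^ ((n - k).choose 2)) := by
  obtain ⟨m, rfl⟩ := Nat.exists_eq_add_of_le h
  rw [show k + m + 1 - k = m + 1 by omega, Nat.add_sub_cancel_left, Nat.choose_succ_succ,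
    Nat.choose_one_right]
  ring

/-- The entries of the inverse of the lower triangular matrix `(binom(n,k)_q)_{n,k}`. -/
def gaussBinomInv (n k : ℕ) : R :=
  gaussBinom q n k * (-1) ^ (n - k) * q ^ ((n - k).choose 2)

theorem gaussBinomInv_of_lt {n k : ℕ} (h : n < k) : gaussBinomInv q n k = 0 := by
  rw [gaussBinomInv, gaussBinom_eq_zero_of_lt q h, zero_mul, zero_mul]

theorem gaussBinomInv_succ_zero (n : ℕ) :
    gaussBinomInv q (n + 1) 0 = -q ^ n * gaussBinomInv q n 0 := by
  simpa [gaussBinomInv, mul_assoc] using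
    pow_mul_neg_one_pow_mul_pow_choose_succ_sub q (Nat.zero_le n)

theorem gaussBinomInv_succ_succ (n k : ℕ) :
    gaussBinomInv q (n + 1) (k + 1) = gaussBinomInv q n k - q ^ n * gaussBinomInv q n (k + 1) := by
  rcases lt_or_ge n (k + 1) with h | h
  · rw [gaussBinomInv_of_lt q h, gaussBinomInv, gaussBinomInv, gaussBinom_succ_succ,
      gaussBinom_eq_zero_of_lt q h, Nat.add_sub_add_right]
    ring
  · have hsign := pow_mul_neg_one_pow_mul_pow_choose_succ_sub q h
    rw [Nat.add_sub_add_right] at hsign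
    simp only [gaussBinomInv, gaussBinom_succ_succ, Nat.add_sub_add_right]
    linear_combination gaussBinom q n (k + 1) * hsign

theorem sum_gaussBinomInv_succ_smul {M : Type*} [AddCommGroup M] [Module R M] (f : ℕ → M)
    (n : ℕ) :
    ∑ k ∈ range (n + 2), gaussBinomInv q (n + 1) k • f k =
      ∑ k ∈ range (n + 1), gaussBinomInv q n k • f (k + 1) -
        q ^ n • ∑ k ∈ range (n + 1), gaussBinomInv q n k • f k := by
  have hshift : ∑ k ∈ range (n + 1), gaussBinomInv q n k • f k =
      ∑ k ∈ range (n + 1), gaussBinomInv q n (k + 1) • f (k + 1) + gaussBinomInv q n 0 • f 0 := by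
    rw [← sum_range_succ' (fun k => gaussBinomInv q n k • f k), sum_range_succ _ (n + 1),
      gaussBinomInv_of_lt q n.lt_succ_self, zero_smul, add_zero]
  rw [sum_range_succ', hshift, smul_add, smul_sum]
  simp only [gaussBinomInv_succ_succ, gaussBinomInv_succ_zero, sub_smul, mul_smul,
    sum_sub_distrib, neg_mul, neg_smul]
  abel

noncomputable def qTranslatePow (k : ℕ) : R[X] :=
  ∑ l ∈ range (k + 1), C (gaussBinom q k l) * X ^ l

theorem coeff_qTranslatePow (k l : ℕ) : (qTranslatePow q k).coeff l = gaussBinom q k l := by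
  simp only [qTranslatePow, finsetSum_coeff, coeff_C_mul_X_pow, sum_ite_eq, mem_range]
  split_ifs with h
  · rfl
  · exact (gaussBinom_eq_zero_of_lt q (by omega)).symm

theorem qTranslatePow_succ (k : ℕ) :
    qTranslatePow q (k + 1) = X * qTranslatePow q k + (qTranslatePow q k).comp (C q * X) := by
  ext (_ | l)
  · simp [coeff_qTranslatePow]
  · simp only [coeff_add, coeff_X_mul, comp_C_mul_X_coeff, coeff_qTranslatePow,
      gaussBinom_succ_succ]
    ring

theorem sum_C_gaussBinomInv_mul_qTranslatePow (n : ℕ) :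
    ∑ k ∈ range (n + 1), C (gaussBinomInv q n k) * qTranslatePow q k = X ^ n := by
  simp only [C_mul']
  induction n with
  | zero => simp [gaussBinomInv, qTranslatePow]
  | succ n ih =>
    have hcomp : (X ^ n : R[X]).comp (C q * X) = q ^ n • X ^ n := by
      rw [X_pow_comp, mul_pow, ← C_pow, C_mul']
    simp only [sum_gaussBinomInv_succ_smul, qTranslatePow_succ, smul_add, sum_add_distrib,
      ← mul_smul_comm, ← mul_sum, ← smul_comp, ← Polynomial.sum_comp, ih, hcomp]
    rw [add_sub_cancel_right, pow_succ']

end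

/-- with `H_k(x) = Σ_{l=0}^k binom(k,l)_q x^l`, one has
`x^n = Σ_{k=0}^n binom(n,k)_q (-1)^{n-k} q^{C(n-k,2)} H_k(x)`. -/
theorem q_moebius_inverse_expansion (R : Type*) [CommRing R] (q : R) :
    ∀ n : ℕ,
      (X : R[X]) ^ n =
        ∑ k ∈ Finset.range (n + 1),
          C (gaussBinom q n k * (-1) ^ (n - k) * q ^ ((n - k).choose 2)) *
            ∑ l ∈ Finset.range (k + 1), C (gaussBinom q k l) * X ^ l :=
  fun n => (sum_C_gaussBinomInv_mul_qTranslatePow q n).symm
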